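/- (Derivation-division algorithm) Let p ∈ 𝕃_n^reg, and define the sequence p^(0) = p and p^(k+1) = ∂p^(k)/reg(∂p^(k)) (as long as ∂p^(k) ≠ 0). Then each p^(k) is n-regular and the algorithm terminates: there exists m ≥ 0 such that p^(m) ∈ R. Consequently the derivation-division complexity DD(p), defined as the smallest such m, is finite. -/

import Mathlib

open scoped BigOperators

noncomputable section

/-- The coefficient ring `R = ℤ[R₁,…,Rₙ]`. -/
abbrev Rring (n : ℕ) : Type := MvPolynomial (Fin n) ℤ

/-- The ring `𝕃ₙ` of Laurent polynomials in `x₁,y₁,…,xₙ,yₙ` over `R`,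
encoded as the monoid algebra of `ℤⁿ × ℤⁿ` (the exponents `(k,l)`). -/
abbrev Lring (n : ℕ) : Type :=
  AddMonoidAlgebra (Rring n) ((Fin n → ℤ) × (Fin n → ℤ))

namespace Panazzolo

/-- `Δⱼ = R₁⋯Rⱼ` (here `j` is 1-indexed: `Dl n j = ∏_{i<j} X i`). -/
def Dl (n j : ℕ) : Rring n :=
  ∏ i ∈ Finset.univ.filter (fun i : Fin n => (i : ℕ) < j), MvPolynomial.X i

/-- Exponent of `P_{j-1} = x₁⋯x_{j-1}/(y₁⋯y_{j-1})` (with `j` 0-indexed). -/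
def Pexp (n : ℕ) (j : Fin n) : (Fin n → ℤ) × (Fin n → ℤ) :=
  (fun i => if i < j then 1 else 0, fun i => if i < j then -1 else 0)

/-- The derivation `∂` on `𝕃ₙ`, determined by
`∂xⱼ = ∂yⱼ = Δⱼ xⱼ (x₁⋯x_{j-1})/(y₁⋯y_{j-1})`. -/
def der (n : ℕ) (p : Lring n) : Lring n :=
  p.coeff.sum fun kl c => ∑ j : Fin n,
    (AddMonoidAlgebra.single (kl + Pexp n j) ((kl.1 j) • (Dl n ((j : ℕ) + 1) * c)) +
     AddMonoidAlgebra.single (kl + Pexp n j + (Pi.single j 1, Pi.single j (-1)))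
       ((kl.2 j) • (Dl n ((j : ℕ) + 1) * c)))

/-- The coefficient `q` of `xᵢ^α yᵢ^β` in `p`, viewed as a polynomial in `(xᵢ,yᵢ)`
(the variables `xᵢ,yᵢ` are erased from the result). -/
def coeffAt (n : ℕ) (i : Fin n) (α β : ℤ) (p : Lring n) : Lring n :=
  ∑ kl ∈ p.coeff.support.filter (fun kl => kl.1 i = α ∧ kl.2 i = β),
    AddMonoidAlgebra.single (Function.update kl.1 i 0, Function.update kl.2 i 0) (p.coeff kl)

/-- `k`-regularity of a Laurent polynomial (the paper's `𝕃ₖ^reg`), defined inductively: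
`0`-regular means a nonzero element of the coefficient ring `R`; `p` is `(k+1)`-regular if it
is homogeneous, involves only the variables `x₁,y₁,…,x_{k+1},y_{k+1}`, is a genuine polynomial
in `(x_{k+1},y_{k+1})` of degree `m`, and the coefficient `q₀` of `x_{k+1}^0 y_{k+1}^m`
is `k`-regular. -/
def IsReg (n : ℕ) : ℕ → Lring n → Prop
  | 0, p => p ≠ 0 ∧ ∀ kl ∈ p.coeff.support, kl = 0
  | (k+1), p =>
      (∀ kl ∈ p.coeff.support, ∀ i : Fin n, k + 1 ≤ (i : ℕ) → kl.1 i = 0 ∧ kl.2 i = 0) ∧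
      (∃ d : Fin n → ℤ, ∀ kl ∈ p.coeff.support, kl.1 + kl.2 = d) ∧
      (∃ m : ℕ, (∀ kl ∈ p.coeff.support, ∀ i : Fin n, (i : ℕ) = k →
          0 ≤ kl.1 i ∧ 0 ≤ kl.2 i ∧ kl.1 i + kl.2 i = (m : ℤ)) ∧
        ∀ i : Fin n, (i : ℕ) = k → IsReg n k (coeffAt n i 0 (m : ℤ) p))

-- The exponent of the regularization monomial `reg(p)` (computed through the first `k`
-- variable pairs, from the top one down).
open Classical in
def regExp (n : ℕ) : ℕ → Lring n → (Fin n → ℤ) × (Fin n → ℤ)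
  | 0, _ => 0
  | (k+1), p =>
      if h : k < n ∧ p ≠ 0 then
        have hs : p.coeff.support.Nonempty := Finsupp.support_nonempty_iff.mpr
          (fun hc => h.2 (by rw [← AddMonoidAlgebra.ofCoeff_coeff p, hc]; rfl))
        let i : Fin n := ⟨k, h.1⟩
        let n0 : ℤ := (p.coeff.support.image fun kl => kl.1 i).min' (hs.image _)
        let l0 : ℤ := (p.coeff.support.image fun kl => kl.2 i).min' (hs.image _)
        let n1 : ℤ := (p.coeff.support.image fun kl => kl.2 i).max' (hs.image _)
        (Pi.single i n0, Pi.single i l0) + regExp n k (coeffAt n i n0 n1 p)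
      else 0

/-- Division by the regularization monomial: `q ↦ q/reg(q)`. -/
def divreg (n : ℕ) (q : Lring n) : Lring n :=
  AddMonoidAlgebra.single (-(regExp n n q)) 1 * q

/-- The derivation-division sequence `p⁽⁰⁾ = p`, `p⁽ᵏ⁺¹⁾ = ∂p⁽ᵏ⁾ / reg(∂p⁽ᵏ⁾)`. -/
def seqDD (n : ℕ) (p : Lring n) : ℕ → Lring n
  | 0 => p
  | (k+1) => divreg n (der n (seqDD n p k))

/-- `p` belongs to the coefficient ring `R ⊆ 𝕃ₙ`. -/
def InR (n : ℕ) (p : Lring n) : Prop := ∀ kl ∈ p.coeff.support, kl = 0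

/-- The reverse lexicographic (strict) order on `ℕⁿ`. -/
def rlexLt (n : ℕ) (d d' : Fin n → ℕ) : Prop :=
  ∃ i : Fin n, (∀ j : Fin n, i < j → d j = d' j) ∧ d i < d' i

/-- The monomial `yⱼ^e` (with `j` 1-indexed). -/
def ymon (n : ℕ) (j e : ℕ) : Lring n :=
  AddMonoidAlgebra.single (0, fun i : Fin n => if (i : ℕ) + 1 = j then (e : ℤ) else 0) 1

/-- The nested expression `Q_j + (⋯(Q₂ + (Q₁ + α y₁^{m₁}) y₂^{m₂})⋯) y_j^{m_j}`. -/
def nestedP (n : ℕ) (α : Rring n) (Q : ℕ → Lring n) (m : ℕ → ℕ) : ℕ → Lring n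
  | 0 => AddMonoidAlgebra.single 0 α
  | (j+1) => Q (j+1) + nestedP n α Q m j * ymon n (j+1) (m (j+1))

/-- Auxiliary recursion for the function `H_k` of Section 6. -/
def Haux {k : ℕ} (f : (Fin (k+1) → ℕ) → ℕ) : (Fin (k+1) → ℕ) → ℕ → ℕ
  | μ, 0 => f μ
  | μ, (t+1) => Haux f (Function.update μ (Fin.last k) (μ (Fin.last k) + f μ)) t

/-- The functions `H_k : ℕᵏ → ℕ` of Section 6. -/
def Hfun : (k : ℕ) → (Fin k → ℕ) → ℕ
  | 0, _ => 0
  | 1, m => m 0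
  | (k+2), m => Haux (Hfun (k+1)) (Fin.init m) (m (Fin.last (k+1)))

/-- The regular Laurent polynomial
`p = Δₙ ∑_{j=1}^n (Δⱼ−Δ_{j−1}) (∏_{i=1}^{j−1} xᵢ)(∏_{i=j}^{n−1} yᵢ)`
associated with equation (1) (it lives in the variables `x₁,…,x_{n−1},y₁,…,y_{n−1}`). -/
def pSpec (n : ℕ) : Lring n :=
  ∑ j ∈ Finset.Icc 1 n,
    AddMonoidAlgebra.single
      ((fun i : Fin n => if (i : ℕ) + 1 ≤ j - 1 then 1 else 0),
       (fun i : Fin n => if j ≤ (i : ℕ) + 1 ∧ (i : ℕ) + 1 ≤ n - 1 then (1 : ℤ) else 0))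
      (Dl n n * (Dl n j - Dl n (j - 1)))

/-- `DD(n)`: the number of steps of the derivation-division algorithm applied to `pSpec n`. -/
def DDnum (n : ℕ) : ℕ := sInf {m : ℕ | InR n (seqDD n (pSpec n) m)}

/-- The functions `gᵢ` : `g₀(x) = x`, `g_{i+1}(x) = a_{i+1} + gᵢ(x)^{r_{i+1}}` (real powers),
with 1-indexed parameter families `a r : ℕ → ℝ`. -/
def gfun (a r : ℕ → ℝ) : ℕ → ℝ → ℝ
  | 0 => fun x => x
  | (i+1) => fun x => a (i+1) + gfun a r i x ^ r (i+1)

/-- The functions `fᵢ` : `f_{i+1}(x) = gᵢ(x)^{r_{i+1}}`. -/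
def ffun (a r : ℕ → ℝ) : ℕ → ℝ → ℝ
  | 0 => fun _ => 1
  | (i+1) => fun x => gfun a r i x ^ r (i+1)

/-- The domain `I(a,r)`: the set of `x` where `g₀(x),…,gₙ(x)` are all strictly positive. -/
def Iset (n : ℕ) (a r : ℕ → ℝ) : Set ℝ := {x : ℝ | ∀ i ≤ n, 0 < gfun a r i x}

/-- The solution set `Sₙ(b,a,r) = {x ∈ I(a,r) : gₙ(x) = b x}`. -/
def Sset (n : ℕ) (b : ℝ) (a r : ℕ → ℝ) : Set ℝ :=
  {x ∈ Iset n a r | gfun a r n x = b * x}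

/-- The evaluation morphism `Ψ : 𝕃ₙ → C^ω(I(a,r))`, `Rᵢ ↦ rᵢ`, `xᵢ ↦ fᵢ`, `yᵢ ↦ gᵢ`
(defined pointwise). -/
def Psi (n : ℕ) (a r : ℕ → ℝ) (p : Lring n) : ℝ → ℝ := fun x =>
  p.coeff.sum fun kl c =>
    (MvPolynomial.aeval (fun i : Fin n => r ((i : ℕ) + 1)) c : ℝ) *
      ∏ i : Fin n, (ffun a r ((i : ℕ) + 1) x ^ kl.1 i * gfun a r ((i : ℕ) + 1) x ^ kl.2 i)

/-- `δⱼ = r₁⋯rⱼ` (with `δ₀ = 1`). -/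
def delta (r : ℕ → ℝ) (j : ℕ) : ℝ := ∏ i ∈ Finset.Icc 1 j, r i

/-- Extension of a `Fin n`-indexed parameter vector to a 1-indexed family `ℕ → ℝ`. -/
def extF (n : ℕ) (v : Fin n → ℝ) : ℕ → ℝ :=
  fun i => if h : 1 ≤ i ∧ i ≤ n then v ⟨i - 1, by omega⟩ else 0

end Panazzolo

namespace P6

open AddMonoidAlgebra Finsupp

variable {n : ℕ}

/-- exponent group -/
abbrev G (n : ℕ) := (Fin n → ℤ) × (Fin n → ℤ)

/-- zero out coordinate i -/
def upd (i : Fin n) (kl : G n) : G n :=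
  (Function.update kl.1 i 0, Function.update kl.2 i 0)

/-- multiplication by a unitary monomial -/
def emul (s : G n) (q : Lring n) : Lring n := AddMonoidAlgebra.single s 1 * q

lemma emul_apply (s : G n) (q : Lring n) (kl : G n) :
    (emul s q).coeff kl = q.coeff (-s + kl) := by
  rw [emul, AddMonoidAlgebra.coeff_single_mul_apply, one_mul]

lemma emul_single (s u : G n) (c : Rring n) :
    emul s (AddMonoidAlgebra.single u c) = AddMonoidAlgebra.single (s + u) c := by
  rw [emul, AddMonoidAlgebra.single_mul_single, one_mul]

lemma emul_zero (s : G n) : emul s (0 : Lring n) = 0 := by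
  rw [emul, mul_zero]

lemma emul_add (s : G n) (q r : Lring n) : emul s (q + r) = emul s q + emul s r := by
  rw [emul, emul, emul, mul_add]

lemma emul_emul (s t : G n) (q : Lring n) : emul s (emul t q) = emul (s + t) q := by
  rw [emul, emul, emul, ← mul_assoc, AddMonoidAlgebra.single_mul_single, mul_one]

lemma emul_zero_exp (q : Lring n) : emul (0 : G n) q = q := by
  rw [emul]
  exact one_mul q

lemma mem_support_emul (s : G n) (q : Lring n) (kl : G n) :
    kl ∈ (emul s q).coeff.support ↔ (-s + kl) ∈ q.coeff.support := by
  rw [Finsupp.mem_support_iff, Finsupp.mem_support_iff, emul_apply]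

lemma emul_eq_zero_iff (s : G n) (q : Lring n) : emul s q = 0 ↔ q = 0 := by
  constructor
  · intro h
    have := congrArg (emul (-s)) h
    rwa [emul_emul, neg_add_cancel, emul_zero_exp, emul_zero] at this
  · rintro rfl; exact emul_zero s

end P6
namespace P6

variable {n : ℕ}

open Panazzolo

lemma coeffAt_eq_sum (i : Fin n) (α β : ℤ) (p : Lring n) :
    coeffAt n i α β p = p.coeff.sum (fun kl c =>
      if kl.1 i = α ∧ kl.2 i = β then AddMonoidAlgebra.single (upd i kl) c else 0) := by
  rw [coeffAt, Finsupp.sum, Finset.sum_filter]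
  rfl

lemma coeffAt_zero (i : Fin n) (α β : ℤ) : coeffAt n i α β (0 : Lring n) = 0 := by
  rw [coeffAt_eq_sum, AddMonoidAlgebra.coeff_zero, Finsupp.sum_zero_index]

lemma coeffAt_add (i : Fin n) (α β : ℤ) (p q : Lring n) :
    coeffAt n i α β (p + q) = coeffAt n i α β p + coeffAt n i α β q := by
  rw [coeffAt_eq_sum, coeffAt_eq_sum, coeffAt_eq_sum, AddMonoidAlgebra.coeff_add]
  refine Finsupp.sum_add_index' (fun kl => ?_) (fun kl c d => ?_)
  · split <;> simp
  · split <;> simp [Finsupp.single_add]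

lemma coeffAt_single (i : Fin n) (α β : ℤ) (u : G n) (c : Rring n) :
    coeffAt n i α β (AddMonoidAlgebra.single u c) =
      if u.1 i = α ∧ u.2 i = β then AddMonoidAlgebra.single (upd i u) c else 0 := by
  rw [coeffAt_eq_sum, AddMonoidAlgebra.coeff_single]
  refine Finsupp.sum_single_index ?_
  split <;> simp

/-- `coeffAt` as an additive hom. -/
def coeffAtHom (i : Fin n) (α β : ℤ) : Lring n →+ Lring n :=
  AddMonoidHom.mk' (coeffAt n i α β) (coeffAt_add i α β)

lemma coeffAtHom_apply (i : Fin n) (α β : ℤ) (p : Lring n) :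
    coeffAtHom i α β p = coeffAt n i α β p := rfl

/-- when coordinate `i` vanishes identically, `coeffAt i 0 0` is the identity. -/
lemma coeffAt_self (i : Fin n) (p : Lring n)
    (h : ∀ kl ∈ p.coeff.support, kl.1 i = 0 ∧ kl.2 i = 0) :
    coeffAt n i 0 0 p = p := by
  rw [coeffAt_eq_sum]
  conv_rhs => rw [← AddMonoidAlgebra.sum_coeff_single p]
  refine Finsupp.sum_congr (fun kl hkl => ?_)
  rw [if_pos (h kl hkl)]
  have h1 := (h kl hkl).1
  have h2 := (h kl hkl).2
  congr 1
  ext j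
  · simp only [upd, Function.update_apply]
    split
    · rename_i hj; rw [hj, h1]
    · rfl
  · simp only [upd, Function.update_apply]
    split
    · rename_i hj; rw [hj, h2]
    · rfl

lemma coeffAt_emul (i : Fin n) (α β : ℤ) (s : G n) (p : Lring n) :
    coeffAt n i α β (emul s p) =
      emul (upd i s) (coeffAt n i (α - s.1 i) (β - s.2 i) p) := by
  induction p using AddMonoidAlgebra.induction with
  | zero => rw [emul_zero, coeffAt_zero, coeffAt_zero, emul_zero]
  | single_add u c f _ _ ih =>
    rw [emul_add, coeffAt_add, coeffAt_add, emul_add, ih]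
    congr 1
    rw [emul_single, coeffAt_single, coeffAt_single]
    have hcond : ((s + u).1 i = α ∧ (s + u).2 i = β) ↔ (u.1 i = α - s.1 i ∧ u.2 i = β - s.2 i) := by
      constructor <;> intro h <;> constructor <;>
        · have h1 := h.1; have h2 := h.2
          simp only [Prod.fst_add, Prod.snd_add, Pi.add_apply] at *
          omega
    split
    · rename_i h
      rw [if_pos (hcond.mp h), emul_single]
      congr 1
      show upd i (s + u) = upd i s + upd i u
      unfold upd
      ext j
      · simp only [Prod.fst_add, Pi.add_apply, Function.update_apply]
        split <;> simp
      · simp only [Prod.snd_add, Pi.add_apply, Function.update_apply]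
        split <;> simp
    · rename_i h
      rw [if_neg (fun hc => h (hcond.mpr hc)), emul_zero]

end P6
namespace P6

variable {n : ℕ}

open Panazzolo

/-- The contribution of one monomial to `der`. -/
def derTerm (n : ℕ) (kl : G n) (c : Rring n) : Lring n :=
  ∑ j : Fin n,
    (AddMonoidAlgebra.single (kl + Pexp n j) ((kl.1 j) • (Dl n ((j : ℕ) + 1) * c)) +
     AddMonoidAlgebra.single (kl + Pexp n j + (Pi.single j 1, Pi.single j (-1)))
       ((kl.2 j) • (Dl n ((j : ℕ) + 1) * c)))

lemma der_eq_sum (p : Lring n) : der n p = p.coeff.sum (fun kl c => derTerm n kl c) := rfl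

lemma derTerm_zero (kl : G n) : derTerm n kl 0 = 0 := by
  unfold derTerm
  refine Finset.sum_eq_zero (fun j _ => ?_)
  simp

lemma derTerm_add (kl : G n) (c d : Rring n) :
    derTerm n kl (c + d) = derTerm n kl c + derTerm n kl d := by
  unfold derTerm
  rw [← Finset.sum_add_distrib]
  refine Finset.sum_congr rfl (fun j _ => ?_)
  rw [mul_add, smul_add, smul_add]
  rw [show ∀ (a : G n) (x y : Rring n), AddMonoidAlgebra.single a (x + y) = AddMonoidAlgebra.single a x + AddMonoidAlgebra.single a y from fun a x y => AddMonoidAlgebra.single_add a x y]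
  rw [show ∀ (a : G n) (x y : Rring n), AddMonoidAlgebra.single a (x + y) = AddMonoidAlgebra.single a x + AddMonoidAlgebra.single a y from fun a x y => AddMonoidAlgebra.single_add a x y]
  abel

lemma der_zero : der n (0 : Lring n) = 0 := by
  rw [der_eq_sum, AddMonoidAlgebra.coeff_zero, Finsupp.sum_zero_index]

lemma der_add (p q : Lring n) : der n (p + q) = der n p + der n q := by
  rw [der_eq_sum, der_eq_sum, der_eq_sum, AddMonoidAlgebra.coeff_add]
  exact Finsupp.sum_add_index' (fun kl => derTerm_zero kl) (fun kl c d => derTerm_add kl c d)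

/-- `der` as an additive hom. -/
def derHom (n : ℕ) : Lring n →+ Lring n := AddMonoidHom.mk' (der n) der_add

lemma der_single (u : G n) (c : Rring n) :
    der n (AddMonoidAlgebra.single u c) = derTerm n u c := by
  rw [der_eq_sum, AddMonoidAlgebra.coeff_single]
  exact Finsupp.sum_single_index (derTerm_zero u)

lemma der_support_sum (p : Lring n) :
    der n p = ∑ kl ∈ p.coeff.support, derTerm n kl (p.coeff kl) := rfl

/-- structure of the support of `der`. -/
lemma support_der (p : Lring n) {kl' : G n} (h : kl' ∈ (der n p).coeff.support) :
    ∃ kl ∈ p.coeff.support, ∃ j : Fin n,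
      (kl.1 j ≠ 0 ∧ kl' = kl + Pexp n j) ∨
      (kl.2 j ≠ 0 ∧ kl' = kl + Pexp n j + (Pi.single j 1, Pi.single j (-1))) := by
  rw [der_support_sum, AddMonoidAlgebra.coeff_sum] at h
  have h1 := Finsupp.support_finset_sum h
  rw [Finset.mem_biUnion] at h1
  obtain ⟨kl, hkl, hmem⟩ := h1
  refine ⟨kl, hkl, ?_⟩
  unfold derTerm at hmem
  rw [AddMonoidAlgebra.coeff_sum] at hmem
  have h2 := Finsupp.support_finset_sum hmem
  rw [Finset.mem_biUnion] at h2
  obtain ⟨j, _, hmem2⟩ := h2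
  refine ⟨j, ?_⟩
  simp only [AddMonoidAlgebra.coeff_add, AddMonoidAlgebra.coeff_single] at hmem2
  have h3 := Finsupp.support_add hmem2
  rw [Finset.mem_union] at h3
  rcases h3 with h3 | h3
  · left
    rw [Finsupp.mem_support_iff] at h3
    constructor
    · intro hz
      rw [hz] at h3; simp at h3
    · by_contra hne
      rw [Finsupp.single_apply_ne_zero] at h3
      exact hne h3.1

  · right
    rw [Finsupp.mem_support_iff] at h3
    constructor
    · intro hz
      rw [hz] at h3; simp at h3
    · by_contra hne
      rw [Finsupp.single_apply_ne_zero] at h3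
      exact hne h3.1


end P6
namespace P6

variable {n : ℕ}

open Panazzolo

/-- support vanishes from coordinate `t` on -/
def CZ (t : ℕ) (p : Lring n) : Prop :=
  ∀ kl ∈ p.coeff.support, ∀ j : Fin n, t ≤ (j : ℕ) → kl.1 j = 0 ∧ kl.2 j = 0

/-- homogeneous with a given degree vector -/
def Homog (p : Lring n) (d : Fin n → ℤ) : Prop :=
  ∀ kl ∈ p.coeff.support, kl.1 + kl.2 = d

lemma Pexp_fst (j r : Fin n) : (Pexp n j).1 r = if r < j then 1 else 0 := rfl
lemma Pexp_snd (j r : Fin n) : (Pexp n j).2 r = if r < j then -1 else 0 := rfl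

lemma CZ_der {t : ℕ} {p : Lring n} (h : CZ t p) : CZ t (der n p) := by
  intro kl' hkl' r hr
  obtain ⟨kl, hkl, j, hj⟩ := support_der p hkl'
  have hr0 := h kl hkl r hr
  have hjlt : (j : ℕ) < t := by
    by_contra hge
    have := h kl hkl j (by omega)
    rcases hj with ⟨hne, _⟩ | ⟨hne, _⟩
    · exact hne this.1
    · exact hne this.2
  have hrj : ¬ (r < j) := by
    rw [Fin.lt_def]; omega
  have hrj' : r ≠ j := by
    intro hrr; rw [hrr] at hr; omega
  rcases hj with ⟨_, rfl⟩ | ⟨_, rfl⟩ <;>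
    constructor <;>
      simp [Pexp_fst, Pexp_snd, if_neg hrj, Pi.single_apply, if_neg hrj', hr0.1, hr0.2]

lemma Homog_der {p : Lring n} {d : Fin n → ℤ} (h : Homog p d) : Homog (der n p) d := by
  intro kl' hkl'
  obtain ⟨kl, hkl, j, hj⟩ := support_der p hkl'
  have hd := h kl hkl
  rcases hj with ⟨_, rfl⟩ | ⟨_, rfl⟩ <;>
  · funext r
    have := congrFun hd r
    simp only [Pi.add_apply] at this
    simp only [Prod.fst_add, Prod.snd_add, Pi.add_apply, Pexp_fst, Pexp_snd, Pi.single_apply]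
    split <;> (try split) <;> omega

lemma der_top {i : Fin n} {p : Lring n} (hc : CZ ((i : ℕ) + 1) p)
    (hpos : ∀ kl ∈ p.coeff.support, 0 ≤ kl.1 i ∧ 0 ≤ kl.2 i) :
    ∀ kl' ∈ (der n p).coeff.support, 0 ≤ kl'.1 i ∧ 0 ≤ kl'.2 i := by
  intro kl' hkl'
  obtain ⟨kl, hkl, j, hj⟩ := support_der p hkl'
  have hp := hpos kl hkl
  have hjle : (j : ℕ) ≤ (i : ℕ) := by
    by_contra hgt
    have := hc kl hkl j (by omega)
    rcases hj with ⟨hne, _⟩ | ⟨hne, _⟩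
    · exact hne this.1
    · exact hne this.2
  have hij : ¬ (i < j) := by rw [Fin.lt_def]; omega
  rcases hj with ⟨_, rfl⟩ | ⟨hne2, rfl⟩
  · constructor <;>
      simp only [Prod.fst_add, Prod.snd_add, Pi.add_apply, Pexp_fst, Pexp_snd, if_neg hij] <;>
      omega
  · rcases eq_or_ne i j with rfl | hne
    · have h2 : 1 ≤ kl.2 i := by
        have : kl.2 i ≠ 0 := hne2
        omega
      constructor <;>
        simp only [Prod.fst_add, Prod.snd_add, Pi.add_apply, Pexp_fst, Pexp_snd, if_neg hij,
          Pi.single_eq_same] <;>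
        omega
    · constructor <;>
        simp only [Prod.fst_add, Prod.snd_add, Pi.add_apply, Pexp_fst, Pexp_snd, if_neg hij,
          Pi.single_eq_of_ne hne] <;>
        omega

lemma InR_der {p : Lring n} (h : InR n p) : der n p = 0 := by
  rw [der_support_sum]
  refine Finset.sum_eq_zero (fun kl hkl => ?_)
  have h0 := h kl hkl
  subst h0
  unfold derTerm
  refine Finset.sum_eq_zero (fun j _ => ?_)
  simp

/-- `emul` preserves CZ when the shift has zero coordinates from `t` on. -/
lemma CZ_emul {t : ℕ} {s : G n} {p : Lring n}
    (hs : ∀ j : Fin n, t ≤ (j : ℕ) → s.1 j = 0 ∧ s.2 j = 0) (h : CZ t p) :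
    CZ t (emul s p) := by
  intro kl hkl j hj
  rw [mem_support_emul] at hkl
  have h1 := h _ hkl j hj
  have h2 := hs j hj
  have e1 : (-s + kl).1 j = 0 := h1.1
  have e2 : (-s + kl).2 j = 0 := h1.2
  simp only [Prod.fst_add, Prod.fst_neg, Pi.add_apply, Pi.neg_apply] at e1
  simp only [Prod.snd_add, Prod.snd_neg, Pi.add_apply, Pi.neg_apply] at e2
  constructor <;> omega

lemma Homog_emul {s : G n} {p : Lring n} {d : Fin n → ℤ} (h : Homog p d) :
    Homog (emul s p) (s.1 + s.2 + d) := by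
  intro kl hkl
  rw [mem_support_emul] at hkl
  have h1 := h _ hkl
  funext r
  have := congrFun h1 r
  simp only [Prod.fst_add, Prod.snd_add, Prod.fst_neg, Prod.snd_neg, Pi.add_apply,
    Pi.neg_apply] at this ⊢
  omega

end P6
namespace P6

variable {n : ℕ}

open Panazzolo

lemma upd_add (i : Fin n) (a b : G n) (h1 : b.1 i = 0) (h2 : b.2 i = 0) :
    upd i (a + b) = upd i a + b := by
  unfold upd
  refine Prod.ext ?_ ?_ <;> funext r <;>
  · simp only [Prod.fst_add, Prod.snd_add, Pi.add_apply, Function.update_apply]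
    rcases eq_or_ne r i with rfl | hne
    · simp [h1, h2]
    · simp [hne]

lemma coeffAt_derTerm (i : Fin n) (m : ℤ) (kl : G n) (c : Rring n)
    (hc : ∀ j : Fin n, (i : ℕ) + 1 ≤ (j : ℕ) → kl.1 j = 0 ∧ kl.2 j = 0)
    (hpos : 0 ≤ kl.1 i) :
    coeffAt n i 0 m (derTerm n kl c) =
      if kl.1 i = 0 ∧ kl.2 i = m then derTerm n (upd i kl) c else 0 := by
  have hupd1 : ∀ j : Fin n, j ≠ i → (upd i kl).1 j = kl.1 j := by
    intro j hj; exact Function.update_of_ne hj _ _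
  have hupd2 : ∀ j : Fin n, j ≠ i → (upd i kl).2 j = kl.2 j := by
    intro j hj; exact Function.update_of_ne hj _ _
  have hPexp1 : ∀ j : Fin n, (j : ℕ) ≤ (i : ℕ) → (Pexp n j).1 i = 0 := by
    intro j hj; rw [Pexp_fst, if_neg (by rw [Fin.lt_def]; omega)]
  have hPexp2 : ∀ j : Fin n, (j : ℕ) ≤ (i : ℕ) → (Pexp n j).2 i = 0 := by
    intro j hj; rw [Pexp_snd, if_neg (by rw [Fin.lt_def]; omega)]
  have key : ∀ j : Fin n,
      coeffAt n i 0 m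
        (AddMonoidAlgebra.single (kl + Pexp n j) ((kl.1 j) • (Dl n ((j : ℕ) + 1) * c)) +
         AddMonoidAlgebra.single (kl + Pexp n j + (Pi.single j 1, Pi.single j (-1)))
           ((kl.2 j) • (Dl n ((j : ℕ) + 1) * c)))
      = (if kl.1 i = 0 ∧ kl.2 i = m then
          (AddMonoidAlgebra.single ((upd i kl) + Pexp n j) (((upd i kl).1 j) • (Dl n ((j : ℕ) + 1) * c)) +
           AddMonoidAlgebra.single ((upd i kl) + Pexp n j + (Pi.single j 1, Pi.single j (-1)))
             (((upd i kl).2 j) • (Dl n ((j : ℕ) + 1) * c)))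
         else 0) := by
    intro j
    rw [coeffAt_add, coeffAt_single, coeffAt_single]
    rcases lt_trichotomy ((j : ℕ)) ((i : ℕ)) with hlt | heq | hgt
    · -- j < i : coordinate i untouched
      have hji : j ≠ i := by intro h; rw [h] at hlt; omega
      have e1 : (kl + Pexp n j).1 i = kl.1 i := by
        simp only [Prod.fst_add, Pi.add_apply, hPexp1 j (by omega), add_zero]
      have e2 : (kl + Pexp n j).2 i = kl.2 i := by
        simp only [Prod.snd_add, Pi.add_apply, hPexp2 j (by omega), add_zero]
      have e3 : (kl + Pexp n j + (Pi.single j 1, Pi.single j (-1))).1 i = kl.1 i := by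
        simp only [Prod.fst_add, Pi.add_apply, hPexp1 j (by omega),
          Pi.single_eq_of_ne (Ne.symm hji)]
        ring
      have e4 : (kl + Pexp n j + (Pi.single j 1, Pi.single j (-1))).2 i = kl.2 i := by
        simp only [Prod.snd_add, Pi.add_apply, hPexp2 j (by omega),
          Pi.single_eq_of_ne (Ne.symm hji)]
        ring
      rw [e1, e2, e3, e4]
      have hz1 : (Pexp n j).1 i = 0 := hPexp1 j (by omega)
      have hz2 : (Pexp n j).2 i = 0 := hPexp2 j (by omega)
      have hz3 : (Pi.single j (1:ℤ) : Fin n → ℤ) i = 0 := Pi.single_eq_of_ne (Ne.symm hji) _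
      have hz4 : (Pi.single j (-1:ℤ) : Fin n → ℤ) i = 0 := Pi.single_eq_of_ne (Ne.symm hji) _
      have u1 : upd i (kl + Pexp n j) = upd i kl + Pexp n j := upd_add i kl _ hz1 hz2
      have u2 : upd i (kl + Pexp n j + (Pi.single j 1, Pi.single j (-1)))
          = upd i kl + Pexp n j + (Pi.single j 1, Pi.single j (-1)) := by
        rw [add_assoc, upd_add, ← add_assoc]
        · simp only [Prod.fst_add, Pi.add_apply, hz1, hz3]; ring
        · simp only [Prod.snd_add, Pi.add_apply, hz2, hz4]; ring
      split
      · rw [u1, u2, hupd1 j hji, hupd2 j hji]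
      · rw [add_zero]
    · -- j = i
      have hji : j = i := Fin.ext heq
      subst hji
      have e1 : (kl + Pexp n j).1 j = kl.1 j := by
        simp only [Prod.fst_add, Pi.add_apply, hPexp1 j (by omega), add_zero]
      have e2 : (kl + Pexp n j).2 j = kl.2 j := by
        simp only [Prod.snd_add, Pi.add_apply, hPexp2 j (by omega), add_zero]
      have e3 : (kl + Pexp n j + (Pi.single j 1, Pi.single j (-1))).1 j = kl.1 j + 1 := by
        simp only [Prod.fst_add, Pi.add_apply, hPexp1 j (by omega), Pi.single_eq_same]
        ring
      rw [e1, e2, e3]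
      have hne2 : ¬ (kl.1 j + 1 = 0 ∧ (kl + Pexp n j + (Pi.single j 1, Pi.single j (-1))).2 j = m) := by
        rintro ⟨h1, -⟩; omega
      rw [if_neg hne2, add_zero]
      have hu1 : (upd j kl).1 j = 0 := Function.update_self _ _ _
      have hu2 : (upd j kl).2 j = 0 := Function.update_self _ _ _
      split
      · rename_i hC
        rw [hC.1, hu1, hu2]
        simp
      · rfl
    · -- j > i : coefficients vanish
      have h0 := hc j (by omega)
      have hji : j ≠ i := by intro h; rw [h] at hgt; omega
      have g1 : (upd i kl).1 j = 0 := by rw [hupd1 j hji]; exact h0.1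
      have g2 : (upd i kl).2 j = 0 := by rw [hupd2 j hji]; exact h0.2
      simp [h0.1, h0.2, g1, g2]
  -- now sum over j
  have lhs : coeffAt n i 0 m (derTerm n kl c)
      = ∑ j : Fin n, coeffAt n i 0 m
        (AddMonoidAlgebra.single (kl + Pexp n j) ((kl.1 j) • (Dl n ((j : ℕ) + 1) * c)) +
         AddMonoidAlgebra.single (kl + Pexp n j + (Pi.single j 1, Pi.single j (-1)))
           ((kl.2 j) • (Dl n ((j : ℕ) + 1) * c))) := by
    unfold derTerm
    exact map_sum (coeffAtHom i 0 m) _ _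
  rw [lhs]
  rw [Finset.sum_congr rfl (fun j _ => key j)]
  split
  · unfold derTerm; rfl
  · simp

lemma coeffAt_der (i : Fin n) (m : ℤ) (p : Lring n)
    (hc : CZ ((i : ℕ) + 1) p)
    (hpos : ∀ kl ∈ p.coeff.support, 0 ≤ kl.1 i) :
    coeffAt n i 0 m (der n p) = der n (coeffAt n i 0 m p) := by
  rw [der_support_sum]
  have lhs : coeffAt n i 0 m (∑ kl ∈ p.coeff.support, derTerm n kl (p.coeff kl))
      = ∑ kl ∈ p.coeff.support, coeffAt n i 0 m (derTerm n kl (p.coeff kl)) :=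
    map_sum (coeffAtHom i 0 m) _ _
  rw [lhs]
  rw [coeffAt_eq_sum, Finsupp.sum]
  have rhs : der n (∑ kl ∈ p.coeff.support,
      if kl.1 i = 0 ∧ kl.2 i = m then AddMonoidAlgebra.single (upd i kl) (p.coeff kl) else 0)
      = ∑ kl ∈ p.coeff.support, der n
        (if kl.1 i = 0 ∧ kl.2 i = m then AddMonoidAlgebra.single (upd i kl) (p.coeff kl) else 0) :=
    map_sum (derHom n) _ _
  rw [rhs]
  refine Finset.sum_congr rfl (fun kl hkl => ?_)
  rw [coeffAt_derTerm i m kl (p.coeff kl) (fun j hj => hc kl hkl j hj) (hpos kl hkl)]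
  split
  · rw [der_single]
  · rw [der_zero]

end P6
namespace P6

variable {n : ℕ}

open Panazzolo
open scoped Classical

lemma support_nonempty {q : Lring n} (h : q ≠ 0) : q.coeff.support.Nonempty :=
  Finsupp.support_nonempty_iff.mpr (fun hc => h (AddMonoidAlgebra.coeff_eq_zero.mp hc))

/-- minimal exponent of `x_i` -/
noncomputable def N0 (i : Fin n) (q : Lring n) : ℤ :=
  if h : q = 0 then 0 else (q.coeff.support.image fun kl => kl.1 i).min' ((support_nonempty h).image _)

/-- minimal exponent of `y_i` -/
noncomputable def L0 (i : Fin n) (q : Lring n) : ℤ :=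
  if h : q = 0 then 0 else (q.coeff.support.image fun kl => kl.2 i).min' ((support_nonempty h).image _)

/-- maximal exponent of `y_i` -/
noncomputable def N1 (i : Fin n) (q : Lring n) : ℤ :=
  if h : q = 0 then 0 else (q.coeff.support.image fun kl => kl.2 i).max' ((support_nonempty h).image _)

lemma N0_le {i : Fin n} {q : Lring n} (h : q ≠ 0) {kl : G n} (hkl : kl ∈ q.coeff.support) :
    N0 i q ≤ kl.1 i := by
  rw [N0, dif_neg h]
  exact Finset.min'_le _ _ (Finset.mem_image_of_mem _ hkl)

lemma L0_le {i : Fin n} {q : Lring n} (h : q ≠ 0) {kl : G n} (hkl : kl ∈ q.coeff.support) :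
    L0 i q ≤ kl.2 i := by
  rw [L0, dif_neg h]
  exact Finset.min'_le _ _ (Finset.mem_image_of_mem _ hkl)

lemma le_N1 {i : Fin n} {q : Lring n} (h : q ≠ 0) {kl : G n} (hkl : kl ∈ q.coeff.support) :
    kl.2 i ≤ N1 i q := by
  simp only [N1, dif_neg h]
  apply Finset.le_max'
  exact Finset.mem_image_of_mem _ hkl

lemma exists_N0 {i : Fin n} {q : Lring n} (h : q ≠ 0) :
    ∃ kl ∈ q.coeff.support, kl.1 i = N0 i q := by
  rw [N0, dif_neg h]
  have := Finset.min'_mem (q.coeff.support.image fun kl => kl.1 i) ((support_nonempty h).image _)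
  rw [Finset.mem_image] at this
  obtain ⟨kl, hkl, hv⟩ := this
  exact ⟨kl, hkl, hv⟩

lemma exists_L0 {i : Fin n} {q : Lring n} (h : q ≠ 0) :
    ∃ kl ∈ q.coeff.support, kl.2 i = L0 i q := by
  rw [L0, dif_neg h]
  have := Finset.min'_mem (q.coeff.support.image fun kl => kl.2 i) ((support_nonempty h).image _)
  rw [Finset.mem_image] at this
  obtain ⟨kl, hkl, hv⟩ := this
  exact ⟨kl, hkl, hv⟩

lemma exists_N1 {i : Fin n} {q : Lring n} (h : q ≠ 0) :
    ∃ kl ∈ q.coeff.support, kl.2 i = N1 i q := by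
  rw [N1, dif_neg h]
  have := Finset.max'_mem (q.coeff.support.image fun kl => kl.2 i) ((support_nonempty h).image _)
  rw [Finset.mem_image] at this
  obtain ⟨kl, hkl, hv⟩ := this
  exact ⟨kl, hkl, hv⟩

lemma regExp_zero_arg : ∀ t : ℕ, regExp n t (0 : Lring n) = 0
  | 0 => rfl
  | (t+1) => by
    rw [regExp]
    rw [dif_neg (by simp)]

lemma regExp_succ (k : ℕ) (q : Lring n) (h1 : k < n) (h2 : q ≠ 0) :
    regExp n (k+1) q =
      (Pi.single (⟨k, h1⟩ : Fin n) (N0 ⟨k, h1⟩ q), Pi.single (⟨k, h1⟩ : Fin n) (L0 ⟨k, h1⟩ q)) +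
        regExp n k (coeffAt n ⟨k, h1⟩ (N0 ⟨k, h1⟩ q) (N1 ⟨k, h1⟩ q) q) := by
  rw [regExp, dif_pos (⟨h1, h2⟩ : k < n ∧ q ≠ 0)]
  rw [N0, L0, N1, dif_neg h2, dif_neg h2, dif_neg h2]

lemma regExp_coords (t : ℕ) (q : Lring n) (j : Fin n) (hj : t ≤ (j : ℕ)) :
    (regExp n t q).1 j = 0 ∧ (regExp n t q).2 j = 0 := by
  induction t generalizing q with
  | zero => exact ⟨rfl, rfl⟩
  | succ s ih =>
    rcases eq_or_ne q 0 with rfl | hq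
    · rw [regExp_zero_arg]; exact ⟨rfl, rfl⟩
    rcases lt_or_ge s n with h1 | h1
    · rw [regExp_succ s q h1 hq]
      have hne : j ≠ (⟨s, h1⟩ : Fin n) := by
        intro h; rw [h] at hj; simp only [Fin.val_mk] at hj; omega
      have := ih (coeffAt n ⟨s, h1⟩ (N0 ⟨s, h1⟩ q) (N1 ⟨s, h1⟩ q) q) (by omega)
      constructor <;>
        simp [Pi.single_eq_of_ne hne, this.1, this.2]
    · rw [regExp, dif_neg (by intro h; omega)]
      exact ⟨rfl, rfl⟩

lemma regExp_stable {t : ℕ} (t' : ℕ) (htt' : t ≤ t') (ht' : t' ≤ n) (q : Lring n)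
    (hcz : CZ t q) : regExp n t' q = regExp n t q := by
  induction t' with
  | zero =>
    have : t = 0 := by omega
    rw [this]
  | succ s ih =>
    rcases eq_or_ne t (s+1) with rfl | hne
    · rfl
    have hts : t ≤ s := by omega
    rcases eq_or_ne q 0 with rfl | hq
    · rw [regExp_zero_arg, regExp_zero_arg]
    have h1 : s < n := by omega
    set i : Fin n := ⟨s, h1⟩ with hi
    have hcoord : ∀ kl ∈ q.coeff.support, kl.1 i = 0 ∧ kl.2 i = 0 := by
      intro kl hkl
      refine hcz kl hkl i ?_
      rw [hi]
      simp only [Fin.val_mk]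
      omega
    have hN0 : N0 i q = 0 := by
      obtain ⟨kl, hkl, hv⟩ := exists_N0 (i := i) hq
      rw [← hv]; exact (hcoord kl hkl).1
    have hL0 : L0 i q = 0 := by
      obtain ⟨kl, hkl, hv⟩ := exists_L0 (i := i) hq
      rw [← hv]; exact (hcoord kl hkl).2
    have hN1 : N1 i q = 0 := by
      obtain ⟨kl, hkl, hv⟩ := exists_N1 (i := i) hq
      rw [← hv]; exact (hcoord kl hkl).2
    rw [regExp_succ s q h1 hq]
    rw [← hi, hN0, hL0, hN1, coeffAt_self i q hcoord]
    rw [ih (by omega) (by omega)]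
    simp

end P6
namespace P6

variable {n : ℕ}

open Panazzolo

lemma upd_inj {i : Fin n} {kl kl0 : G n} (h1 : kl.1 i = kl0.1 i) (h2 : kl.2 i = kl0.2 i)
    (h : upd i kl = upd i kl0) : kl = kl0 := by
  unfold upd at h
  have e1 : Function.update kl.1 i 0 = Function.update kl0.1 i 0 := congrArg Prod.fst h
  have e2 : Function.update kl.2 i 0 = Function.update kl0.2 i 0 := congrArg Prod.snd h
  refine Prod.ext ?_ ?_ <;> funext r <;> rcases eq_or_ne r i with rfl | hne
  · exact h1
  · have := congrFun e1 r
    rwa [Function.update_of_ne hne, Function.update_of_ne hne] at this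
  · exact h2
  · have := congrFun e2 r
    rwa [Function.update_of_ne hne, Function.update_of_ne hne] at this

lemma coeffAt_apply_upd (i : Fin n) (α β : ℤ) (q : Lring n) (kl0 : G n)
    (h0 : kl0.1 i = α) (h0' : kl0.2 i = β) :
    (coeffAt n i α β q).coeff (upd i kl0) = q.coeff kl0 := by
  rw [coeffAt]
  rw [AddMonoidAlgebra.coeff_sum, Finset.sum_apply']
  have key : ∀ kl ∈ q.coeff.support.filter (fun kl => kl.1 i = α ∧ kl.2 i = β),
      (AddMonoidAlgebra.single ((Function.update kl.1 i 0, Function.update kl.2 i 0) : G n)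
        (q.coeff kl) : Lring n).coeff (upd i kl0)
        = if kl = kl0 then q.coeff kl else 0 := by
    intro kl hkl
    rw [Finset.mem_filter] at hkl
    rw [AddMonoidAlgebra.coeff_single, Finsupp.single_apply]
    congr 1
    rw [eq_iff_iff]
    constructor
    · intro h
      exact (upd_inj (by rw [hkl.2.1, h0]) (by rw [hkl.2.2, h0']) h.symm).symm
    · intro h; subst h; rfl
  rw [Finset.sum_congr rfl key, Finset.sum_ite_eq']
  split
  · rfl
  · rename_i hnm
    symm
    rw [← Finsupp.notMem_support_iff]
    intro hmem
    exact hnm (Finset.mem_filter.mpr ⟨hmem, h0, h0'⟩)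

lemma mem_support_coeffAt {i : Fin n} {α β : ℤ} {q : Lring n} {kl' : G n}
    (h : kl' ∈ (coeffAt n i α β q).coeff.support) :
    ∃ kl ∈ q.coeff.support, kl.1 i = α ∧ kl.2 i = β ∧ kl' = upd i kl := by
  rw [coeffAt, AddMonoidAlgebra.coeff_sum] at h
  have h1 := Finsupp.support_finset_sum h
  rw [Finset.mem_biUnion] at h1
  obtain ⟨kl, hkl, hmem⟩ := h1
  rw [Finset.mem_filter] at hkl
  rw [AddMonoidAlgebra.coeff_single] at hmem
  have := Finsupp.support_single_subset hmem
  rw [Finset.mem_singleton] at this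
  exact ⟨kl, hkl.1, hkl.2.1, hkl.2.2, this⟩

lemma coeffAt_ne_zero {i : Fin n} {q : Lring n} (hq : q ≠ 0) {d : Fin n → ℤ}
    (hom : Homog q d) :
    coeffAt n i (N0 i q) (N1 i q) q ≠ 0 := by
  obtain ⟨kl0, hkl0, hv⟩ := exists_N0 (i := i) hq
  have hN1d : kl0.2 i = N1 i q := by
    have h1 : kl0.1 i + kl0.2 i = d i := congrFun (hom kl0 hkl0) i
    obtain ⟨kl1, hkl1, hv1⟩ := exists_N1 (i := i) hq
    have h2 : kl1.1 i + kl1.2 i = d i := congrFun (hom kl1 hkl1) i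
    have h3 : N0 i q ≤ kl1.1 i := N0_le hq hkl1
    have h4 : kl0.2 i ≤ N1 i q := le_N1 hq hkl0
    omega
  intro h
  have := coeffAt_apply_upd i (N0 i q) (N1 i q) q kl0 hv hN1d
  rw [h] at this
  rw [Finsupp.mem_support_iff] at hkl0
  exact hkl0 this.symm

/-- `N1 = d i - N0` for homogeneous `q`. -/
lemma N1_eq {i : Fin n} {q : Lring n} (hq : q ≠ 0) {d : Fin n → ℤ} (hom : Homog q d) :
    N1 i q = d i - N0 i q := by
  obtain ⟨kl0, hkl0, hv⟩ := exists_N0 (i := i) hq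
  obtain ⟨kl1, hkl1, hv1⟩ := exists_N1 (i := i) hq
  have h1 := congrFun (hom kl0 hkl0) i
  have h2 := congrFun (hom kl1 hkl1) i
  have h3 : N0 i q ≤ kl1.1 i := N0_le hq hkl1
  have h4 : kl0.2 i ≤ N1 i q := le_N1 hq hkl0
  simp only [Pi.add_apply] at h1 h2
  omega

lemma L0_le_N1 {i : Fin n} {q : Lring n} (hq : q ≠ 0) : L0 i q ≤ N1 i q := by
  obtain ⟨kl1, hkl1, hv1⟩ := exists_N1 (i := i) hq
  have := L0_le (i := i) hq hkl1
  omega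

lemma CZ_coeffAt {s : ℕ} {h1 : s < n} {α β : ℤ} {q : Lring n}
    (hcz : CZ (s+1) q) : CZ s (coeffAt n ⟨s, h1⟩ α β q) := by
  intro kl' hkl' j hj
  obtain ⟨kl, hkl, _, _, rfl⟩ := mem_support_coeffAt hkl'
  rcases eq_or_ne j (⟨s, h1⟩ : Fin n) with rfl | hne
  · exact ⟨Function.update_self _ _ _, Function.update_self _ _ _⟩
  · have hj' : s + 1 ≤ (j : ℕ) := by
      have : (j : ℕ) ≠ s := fun h => hne (Fin.ext h)
      omega
    have := hcz kl hkl j hj'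
    constructor
    · rw [show (upd (⟨s, h1⟩ : Fin n) kl).1 j = kl.1 j from Function.update_of_ne hne _ _]
      exact this.1
    · rw [show (upd (⟨s, h1⟩ : Fin n) kl).2 j = kl.2 j from Function.update_of_ne hne _ _]
      exact this.2

lemma Homog_coeffAt {i : Fin n} {α β : ℤ} {q : Lring n} {d : Fin n → ℤ}
    (hom : Homog q d) : Homog (coeffAt n i α β q) (Function.update d i 0) := by
  intro kl' hkl'
  obtain ⟨kl, hkl, _, _, rfl⟩ := mem_support_coeffAt hkl'
  have := hom kl hkl
  funext r
  have h := congrFun this r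
  simp only [Pi.add_apply] at h ⊢
  rcases eq_or_ne r i with rfl | hne
  · rw [Function.update_self]
    show Function.update kl.1 r 0 r + Function.update kl.2 r 0 r = 0
    rw [Function.update_self, Function.update_self, add_zero]
  · rw [Function.update_of_ne hne]
    show Function.update kl.1 i 0 r + Function.update kl.2 i 0 r = d r
    rw [Function.update_of_ne hne, Function.update_of_ne hne]
    exact h

end P6
namespace P6

variable {n : ℕ}

open Panazzolo

/-- coordinates of `regExp (s+1) q` at the top index -/
lemma RE_fst_top {s : ℕ} (h1 : s < n) {q : Lring n} (hq : q ≠ 0) :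
    (regExp n (s+1) q).1 ⟨s, h1⟩ = N0 ⟨s, h1⟩ q := by
  rw [regExp_succ s q h1 hq]
  have h0 := (regExp_coords s (coeffAt n ⟨s, h1⟩ (N0 ⟨s, h1⟩ q) (N1 ⟨s, h1⟩ q) q) ⟨s, h1⟩
    (le_refl s)).1
  simp [Pi.single_eq_same, h0]

lemma RE_snd_top {s : ℕ} (h1 : s < n) {q : Lring n} (hq : q ≠ 0) :
    (regExp n (s+1) q).2 ⟨s, h1⟩ = L0 ⟨s, h1⟩ q := by
  rw [regExp_succ s q h1 hq]
  have h0 := (regExp_coords s (coeffAt n ⟨s, h1⟩ (N0 ⟨s, h1⟩ q) (N1 ⟨s, h1⟩ q) q) ⟨s, h1⟩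
    (le_refl s)).2
  simp [Pi.single_eq_same, h0]

lemma upd_neg_RE {s : ℕ} (h1 : s < n) {q : Lring n} (hq : q ≠ 0) :
    upd (⟨s, h1⟩ : Fin n) (-(regExp n (s+1) q)) =
      -(regExp n s (coeffAt n ⟨s, h1⟩ (N0 ⟨s, h1⟩ q) (N1 ⟨s, h1⟩ q) q)) := by
  set i : Fin n := ⟨s, h1⟩
  set c := coeffAt n i (N0 i q) (N1 i q) q with hc
  have hRE := regExp_succ s q h1 hq
  refine Prod.ext ?_ ?_ <;> funext r
  · show Function.update (-(regExp n (s+1) q)).1 i 0 r = (-(regExp n s c)).1 r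
    rcases eq_or_ne r i with rfl | hne
    · rw [Function.update_self]
      have h3 := (regExp_coords s c i (le_refl s)).1
      show (0 : ℤ) = -(regExp n s c).1 i
      rw [h3, neg_zero]
    · rw [Function.update_of_ne hne]
      show -((regExp n (s+1) q).1 r) = -((regExp n s c).1 r)
      rw [hRE]
      simp [Pi.single_eq_of_ne (show r ≠ (⟨s, h1⟩ : Fin n) from hne), hc]
      rfl
  · show Function.update (-(regExp n (s+1) q)).2 i 0 r = (-(regExp n s c)).2 r
    rcases eq_or_ne r i with rfl | hne
    · rw [Function.update_self]
      have h3 := (regExp_coords s c i (le_refl s)).2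
      show (0 : ℤ) = -(regExp n s c).2 i
      rw [h3, neg_zero]
    · rw [Function.update_of_ne hne]
      show -((regExp n (s+1) q).2 r) = -((regExp n s c).2 r)
      rw [hRE]
      simp [Pi.single_eq_of_ne (show r ≠ (⟨s, h1⟩ : Fin n) from hne), hc]
      rfl

lemma step_supp {s : ℕ} {q : Lring n} {kl : G n}
    (hkl : kl ∈ (emul (-(regExp n (s+1) q)) q).coeff.support) :
    regExp n (s+1) q + kl ∈ q.coeff.support := by
  rw [mem_support_emul] at hkl
  rwa [neg_neg] at hkl

lemma mQ_cast {s : ℕ} (h1 : s < n) {q : Lring n} (hq : q ≠ 0) :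
    ((N1 (⟨s, h1⟩ : Fin n) q - L0 ⟨s, h1⟩ q).toNat : ℤ)
      = N1 (⟨s, h1⟩ : Fin n) q - L0 ⟨s, h1⟩ q := by
  have := L0_le_N1 (i := (⟨s, h1⟩ : Fin n)) hq
  omega

lemma step_top {s : ℕ} (h1 : s < n) {q : Lring n} (hq : q ≠ 0) {d : Fin n → ℤ}
    (hom : Homog q d) :
    ∀ kl ∈ (emul (-(regExp n (s+1) q)) q).coeff.support,
    0 ≤ kl.1 ⟨s, h1⟩ ∧ 0 ≤ kl.2 ⟨s, h1⟩ ∧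
      kl.1 ⟨s, h1⟩ + kl.2 ⟨s, h1⟩ = ((N1 (⟨s, h1⟩ : Fin n) q - L0 ⟨s, h1⟩ q).toNat : ℤ) := by
  intro kl hkl
  set i : Fin n := ⟨s, h1⟩
  have hmem := step_supp hkl
  have e1 : (regExp n (s+1) q + kl).1 i = N0 i q + kl.1 i := by
    show (regExp n (s+1) q).1 i + kl.1 i = N0 i q + kl.1 i
    rw [RE_fst_top h1 hq]
  have e2 : (regExp n (s+1) q + kl).2 i = L0 i q + kl.2 i := by
    show (regExp n (s+1) q).2 i + kl.2 i = L0 i q + kl.2 i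
    rw [RE_snd_top h1 hq]
  have f1 := N0_le (i := i) hq hmem
  have f2 := L0_le (i := i) hq hmem
  have f3 := le_N1 (i := i) hq hmem
  have f4 := congrFun (hom _ hmem) i
  simp only [Pi.add_apply] at f4
  have f5 := N1_eq (i := i) hq hom
  rw [e1] at f1
  rw [e2] at f2 f3
  have f6 : (regExp n (s+1) q + kl).1 i + (regExp n (s+1) q + kl).2 i = d i := f4
  rw [e1, e2] at f6
  omega

lemma step_cz {s : ℕ} {q : Lring n} (hcz : CZ (s+1) q) :
    CZ (s+1) (emul (-(regExp n (s+1) q)) q) := by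
  refine CZ_emul ?_ hcz
  intro j hj
  have := regExp_coords (s+1) q j hj
  constructor
  · show -(regExp n (s+1) q).1 j = 0
    rw [this.1, neg_zero]
  · show -(regExp n (s+1) q).2 j = 0
    rw [this.2, neg_zero]

lemma step_coeff {s : ℕ} (h1 : s < n) {q : Lring n} (hq : q ≠ 0) :
    coeffAt n ⟨s, h1⟩ 0 (((N1 (⟨s, h1⟩ : Fin n) q - L0 ⟨s, h1⟩ q).toNat : ℤ))
        (emul (-(regExp n (s+1) q)) q) =
      emul (-(regExp n s (coeffAt n ⟨s, h1⟩ (N0 ⟨s, h1⟩ q) (N1 ⟨s, h1⟩ q) q)))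
        (coeffAt n ⟨s, h1⟩ (N0 ⟨s, h1⟩ q) (N1 ⟨s, h1⟩ q) q) := by
  set i : Fin n := ⟨s, h1⟩
  rw [coeffAt_emul]
  rw [upd_neg_RE h1 hq]
  have e1 : (0 : ℤ) - (-(regExp n (s+1) q)).1 i = N0 i q := by
    show (0:ℤ) - (-((regExp n (s+1) q).1 i)) = N0 i q
    rw [RE_fst_top h1 hq]; ring
  have e2 : (((N1 i q - L0 i q).toNat : ℤ)) - (-(regExp n (s+1) q)).2 i = N1 i q := by
    show (((N1 i q - L0 i q).toNat : ℤ)) - (-((regExp n (s+1) q).2 i)) = N1 i q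
    rw [RE_snd_top h1 hq, mQ_cast h1 hq]; ring
  rw [e1, e2]

/-- Main auto-regularity lemma: dividing a nonzero homogeneous polynomial by its
regularization monomial yields a regular polynomial. -/
lemma Bmain : ∀ t : ℕ, t ≤ n → ∀ q : Lring n, q ≠ 0 → CZ t q → (∃ d, Homog q d) →
    IsReg n t (emul (-(regExp n t q)) q) := by
  intro t
  induction t with
  | zero =>
    intro _ q hq hcz _
    have : regExp n 0 q = 0 := rfl
    rw [this, neg_zero, emul_zero_exp]
    refine ⟨hq, fun kl hkl => ?_⟩
    have := hcz kl hkl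
    refine Prod.ext ?_ ?_ <;> funext r
    · exact (this r (Nat.zero_le _)).1
    · exact (this r (Nat.zero_le _)).2
  | succ s ih =>
    intro hsn q hq hcz hom
    obtain ⟨d, hd⟩ := hom
    have h1 : s < n := by omega
    set i : Fin n := ⟨s, h1⟩ with hidef
    set c := coeffAt n i (N0 i q) (N1 i q) q with hc
    have hcne : c ≠ 0 := coeffAt_ne_zero hq hd
    have hccz : CZ s c := CZ_coeffAt (h1 := h1) hcz
    have hchom : Homog c (Function.update d i 0) := Homog_coeffAt hd
    show IsReg n (s+1) (emul (-(regExp n (s+1) q)) q)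
    refine ⟨?_, ?_, ?_⟩
    · exact step_cz hcz
    · exact ⟨_, Homog_emul hd⟩
    · refine ⟨(N1 i q - L0 i q).toNat, ?_, ?_⟩
      · intro kl hkl j hj
        have hj' : j = i := Fin.ext hj
        subst hj'
        exact step_top h1 hq hd kl hkl
      · intro j hj
        have hj' : j = i := Fin.ext hj
        subst hj'
        rw [step_coeff h1 hq]
        exact ih (by omega) c hcne hccz ⟨_, hchom⟩

end P6
namespace P6

variable {n : ℕ}

open Panazzolo

lemma InR_zero : InR n (0 : Lring n) := by
  intro kl hkl
  simp at hkl

lemma divreg_eq (q : Lring n) : divreg n q = emul (-(regExp n n q)) q := rfl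

lemma divreg_zero : divreg n (0 : Lring n) = 0 := by
  rw [divreg_eq, emul_zero]

lemma seqDD_zero (p : Lring n) : seqDD n p 0 = p := rfl

lemma seqDD_succ (p : Lring n) (j : ℕ) :
    seqDD n p (j+1) = divreg n (der n (seqDD n p j)) := rfl

lemma seqDD_shift (p : Lring n) (j : ℕ) :
    seqDD n p (j+1) = seqDD n (divreg n (der n p)) j := by
  induction j with
  | zero => rfl
  | succ j ih => rw [seqDD_succ, ih, ← seqDD_succ]

lemma InR_seq_succ {p : Lring n} {j : ℕ} (h : InR n (seqDD n p j)) :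
    InR n (seqDD n p (j+1)) := by
  rw [seqDD_succ, InR_der h, divreg_zero]
  exact InR_zero

lemma IsReg_ne_zero : ∀ k : ℕ, k ≤ n → ∀ q : Lring n, IsReg n k q → q ≠ 0 := by
  intro k
  induction k with
  | zero => intro _ q hq; exact hq.1
  | succ s ih =>
    intro hsn q hq
    have h1 : s < n := by omega
    obtain ⟨_, _, m, _, hreg⟩ := hq
    intro h0
    subst h0
    have := ih (by omega) _ (hreg ⟨s, h1⟩ rfl)
    rw [coeffAt_zero] at this
    exact this rfl

lemma IsReg_CZ : ∀ k : ℕ, ∀ q : Lring n, IsReg n k q → CZ k q := by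
  intro k
  cases k with
  | zero =>
    intro q hq kl hkl j _
    have := hq.2 kl hkl
    subst this
    exact ⟨rfl, rfl⟩
  | succ s =>
    intro q hq
    exact hq.1

lemma IsReg_homog : ∀ k : ℕ, ∀ q : Lring n, IsReg n k q → ∃ d, Homog q d := by
  intro k
  cases k with
  | zero =>
    intro q hq
    refine ⟨0, fun kl hkl => ?_⟩
    have := hq.2 kl hkl
    subst this
    show (0 : G n).1 + (0 : G n).2 = 0
    simp
  | succ s =>
    intro q hq
    exact hq.2.1

lemma CZ_mono {t t' : ℕ} (h : t ≤ t') {q : Lring n} (hq : CZ t q) : CZ t' q := by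
  intro kl hkl j hj
  exact hq kl hkl j (by omega)

lemma CZ_top (q : Lring n) : CZ n q := by
  intro kl hkl j hj
  have := j.isLt
  omega

lemma IsReg_mono {k : ℕ} (hk : k < n) {q : Lring n} (hq : IsReg n k q) :
    IsReg n (k+1) q := by
  have hcz := IsReg_CZ k q hq
  refine ⟨CZ_mono (by omega) hcz, IsReg_homog k q hq, 0, ?_, ?_⟩
  · intro kl hkl j hj
    have hji : j = (⟨k, hk⟩ : Fin n) := Fin.ext hj
    subst hji
    have := hcz kl hkl ⟨k, hk⟩ (le_refl k)
    refine ⟨le_of_eq this.1.symm, le_of_eq this.2.symm, ?_⟩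
    rw [this.1, this.2]
    simp
  · intro j hj
    have hji : j = (⟨k, hk⟩ : Fin n) := Fin.ext hj
    subst hji
    have h2 : coeffAt n ⟨k, hk⟩ 0 0 q = q := by
      refine coeffAt_self _ q ?_
      intro kl hkl
      exact hcz kl hkl ⟨k, hk⟩ (le_refl k)
    rw [Nat.cast_zero, h2]
    exact hq

end P6
namespace P6

variable {n : ℕ}

open Panazzolo

/-- witnessed regularity data at level `k+1` -/
def RW (k : ℕ) (hk : k < n) (p : Lring n) (m : ℕ) : Prop :=
  IsReg n (k+1) p ∧
  (∀ kl ∈ p.coeff.support, 0 ≤ kl.1 ⟨k, hk⟩ ∧ 0 ≤ kl.2 ⟨k, hk⟩ ∧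
    kl.1 ⟨k, hk⟩ + kl.2 ⟨k, hk⟩ = (m : ℤ)) ∧
  IsReg n k (coeffAt n ⟨k, hk⟩ 0 (m : ℤ) p)

lemma one_step {k : ℕ} (hk : k < n) {p : Lring n} {m : ℕ} (hrw : RW k hk p m)
    (hder : der n p ≠ 0) :
    ∃ m' : ℕ, m' ≤ m ∧ RW k hk (divreg n (der n p)) m' ∧
      (m' < m ∨ (m' = m ∧ ¬ InR n (coeffAt n ⟨k, hk⟩ 0 (m : ℤ) p) ∧
        coeffAt n ⟨k, hk⟩ 0 (m' : ℤ) (divreg n (der n p)) =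
          divreg n (der n (coeffAt n ⟨k, hk⟩ 0 (m : ℤ) p)))) := by
  set i : Fin n := ⟨k, hk⟩ with hidef
  set P := der n p with hPdef
  have hkn : k + 1 ≤ n := hk
  have hpne : p ≠ 0 := by
    intro h; apply hder; rw [hPdef, h]; exact der_zero
  have hcz : CZ (k+1) p := IsReg_CZ (k+1) p hrw.1
  obtain ⟨d, hd⟩ := IsReg_homog (k+1) p hrw.1
  have hdi : d i = (m : ℤ) := by
    obtain ⟨kl0, hkl0⟩ := support_nonempty hpne
    have h1 := congrFun (hd kl0 hkl0) i
    have h2 := (hrw.2.1 kl0 hkl0).2.2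
    rw [← hidef] at h2
    simp only [Pi.add_apply] at h1
    omega
  have hczP : CZ (k+1) P := CZ_der hcz
  have hdP : Homog P d := Homog_der hd
  have htopP : ∀ kl ∈ P.coeff.support, 0 ≤ kl.1 i ∧ 0 ≤ kl.2 i :=
    der_top hcz (fun kl hkl => ⟨(hrw.2.1 kl hkl).1, (hrw.2.1 kl hkl).2.1⟩)
  have hN0 : 0 ≤ N0 i P := by
    obtain ⟨kl, hkl, hv⟩ := exists_N0 (i := i) hder
    rw [← hv]; exact (htopP kl hkl).1
  have hL0 : 0 ≤ L0 i P := by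
    obtain ⟨kl, hkl, hv⟩ := exists_L0 (i := i) hder
    rw [← hv]; exact (htopP kl hkl).2
  have hN1 : N1 i P = d i - N0 i P := N1_eq hder hdP
  set m' : ℕ := (N1 i P - L0 i P).toNat with hm'def
  have hm'cast : (m' : ℤ) = N1 i P - L0 i P := mQ_cast hk hder
  have hm'le : m' ≤ m := by omega
  have hp'eq : divreg n P = emul (-(regExp n (k+1) P)) P := by
    rw [divreg_eq, regExp_stable (t := k+1) n hkn (le_refl n) P hczP]
  have hreg' : IsReg n (k+1) (divreg n P) := by
    rw [hp'eq]
    exact Bmain (k+1) hkn P hder hczP ⟨d, hdP⟩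
  set c := coeffAt n i (N0 i P) (N1 i P) P with hcdef
  have hcz_c : CZ k c := CZ_coeffAt hczP
  have hhom_c := Homog_coeffAt (i := i) (α := N0 i P) (β := N1 i P) hdP
  have hcne : c ≠ 0 := coeffAt_ne_zero hder hdP
  have hcoeff' : coeffAt n i 0 (m' : ℤ) (divreg n P) = emul (-(regExp n k c)) c := by
    rw [hp'eq]
    exact step_coeff hk hder
  have hq0' : IsReg n k (coeffAt n i 0 (m' : ℤ) (divreg n P)) := by
    rw [hcoeff']
    exact Bmain k (by omega) c hcne hcz_c ⟨_, hhom_c⟩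
  have htop' : ∀ kl ∈ (divreg n P).coeff.support,
      0 ≤ kl.1 i ∧ 0 ≤ kl.2 i ∧ kl.1 i + kl.2 i = (m' : ℤ) := by
    rw [hp'eq]
    exact step_top hk hder hdP
  have hrw' : RW k hk (divreg n P) m' := ⟨hreg', htop', hq0'⟩
  refine ⟨m', hm'le, hrw', ?_⟩
  by_cases hA : N0 i P = 0 ∧ L0 i P = 0
  · right
    have hmm : m' = m := by omega
    have hc_eq : c = der n (coeffAt n i 0 (m : ℤ) p) := by
      rw [hcdef, hA.1]
      have : N1 i P = (m : ℤ) := by omega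
      rw [this]
      exact coeffAt_der i (m : ℤ) p hcz (fun kl hkl => (hrw.2.1 kl hkl).1)
    refine ⟨hmm, ?_, ?_⟩
    · intro hInR
      apply hcne
      rw [hc_eq, InR_der hInR]
    · rw [hcoeff', hc_eq, divreg_eq]
      have hczq0 : CZ k (der n (coeffAt n i 0 (m : ℤ) p)) :=
        CZ_der (IsReg_CZ k _ hrw.2.2)
      rw [regExp_stable (t := k) n (by omega) (le_refl n) _ hczq0]
  · left
    omega

lemma Tterm : ∀ k : ℕ, k ≤ n → ∀ p : Lring n, IsReg n k p → ∃ j, InR n (seqDD n p j) := by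
  intro k
  induction k with
  | zero =>
    intro _ p hp
    exact ⟨0, hp.2⟩
  | succ k ihk =>
    intro hkn p hp
    have hk : k < n := hkn
    -- the main double induction
    have main : ∀ M : ℕ, ∀ S : ℕ, ∀ p : Lring n, ∀ m : ℕ, m ≤ M → RW k hk p m →
        InR n (seqDD n (coeffAt n ⟨k, hk⟩ 0 (m : ℤ) p) S) → ∃ j, InR n (seqDD n p j) := by
      intro M
      induction M with
      | zero =>
        intro S p m hm hrw hInR
        by_cases hder : der n p = 0
        · refine ⟨1, ?_⟩
          rw [seqDD_succ, seqDD_zero, hder, divreg_zero]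
          exact InR_zero
        · -- m = 0 forced
          have hm0 : m = 0 := by omega
          subst hm0
          have hall : ∀ kl ∈ p.coeff.support, kl.1 ⟨k, hk⟩ = 0 ∧ kl.2 ⟨k, hk⟩ = 0 := by
            intro kl hkl
            have := hrw.2.1 kl hkl
            constructor <;> omega
          have hself : coeffAt n ⟨k, hk⟩ 0 ((0 : ℕ) : ℤ) p = p := by
            rw [Nat.cast_zero]
            exact coeffAt_self _ p hall
          have hpreg : IsReg n k p := by
            have := hrw.2.2
            rwa [hself] at this
          exact ihk (by omega) p hpreg
      | succ M ihM =>
        intro S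
        induction S with
        | zero =>
          intro p m hm hrw hInR
          by_cases hder : der n p = 0
          · refine ⟨1, ?_⟩
            rw [seqDD_succ, seqDD_zero, hder, divreg_zero]
            exact InR_zero
          by_cases hm0 : m = 0
          · subst hm0
            have hall : ∀ kl ∈ p.coeff.support, kl.1 ⟨k, hk⟩ = 0 ∧ kl.2 ⟨k, hk⟩ = 0 := by
              intro kl hkl
              have := hrw.2.1 kl hkl
              constructor <;> omega
            have hself : coeffAt n ⟨k, hk⟩ 0 ((0 : ℕ) : ℤ) p = p := by
              rw [Nat.cast_zero]
              exact coeffAt_self _ p hall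
            have hpreg : IsReg n k p := by
              have := hrw.2.2
              rwa [hself] at this
            exact ihk (by omega) p hpreg
          obtain ⟨m', hm'le, hrw', hdisj⟩ := one_step hk hrw hder
          rcases hdisj with hlt | ⟨heq, hq0ne, hstep⟩
          · obtain ⟨S'', hS''⟩ := ihk (by omega) _ hrw'.2.2
            obtain ⟨j, hj⟩ := ihM S'' _ m' (by omega) hrw' hS''
            refine ⟨j + 1, ?_⟩
            rw [seqDD_shift]
            exact hj
          · exact absurd (hInR) hq0ne
        | succ S ihS =>
          intro p m hm hrw hInR
          by_cases hder : der n p = 0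
          · refine ⟨1, ?_⟩
            rw [seqDD_succ, seqDD_zero, hder, divreg_zero]
            exact InR_zero
          by_cases hm0 : m = 0
          · subst hm0
            have hall : ∀ kl ∈ p.coeff.support, kl.1 ⟨k, hk⟩ = 0 ∧ kl.2 ⟨k, hk⟩ = 0 := by
              intro kl hkl
              have := hrw.2.1 kl hkl
              constructor <;> omega
            have hself : coeffAt n ⟨k, hk⟩ 0 ((0 : ℕ) : ℤ) p = p := by
              rw [Nat.cast_zero]
              exact coeffAt_self _ p hall
            have hpreg : IsReg n k p := by
              have := hrw.2.2
              rwa [hself] at this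
            exact ihk (by omega) p hpreg
          obtain ⟨m', hm'le, hrw', hdisj⟩ := one_step hk hrw hder
          rcases hdisj with hlt | ⟨heq, hq0ne, hstep⟩
          · obtain ⟨S'', hS''⟩ := ihk (by omega) _ hrw'.2.2
            obtain ⟨j, hj⟩ := ihM S'' _ m' (by omega) hrw' hS''
            refine ⟨j + 1, ?_⟩
            rw [seqDD_shift]
            exact hj
          · -- m' = m, use the S-induction
            have hInR' : InR n (seqDD n (coeffAt n ⟨k, hk⟩ 0 ((m' : ℕ) : ℤ)
                (divreg n (der n p))) S) := by
              rw [hstep, ← seqDD_shift]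
              exact hInR
            obtain ⟨j, hj⟩ := ihS _ m' (by omega) hrw' hInR'
            refine ⟨j + 1, ?_⟩
            rw [seqDD_shift]
            exact hj
    -- assemble
    obtain ⟨hcz1, hhom, m₀, htop, hq0reg⟩ := hp
    have hrw : RW k hk p m₀ :=
      ⟨⟨hcz1, hhom, m₀, htop, hq0reg⟩, fun kl hkl => htop kl hkl ⟨k, hk⟩ rfl,
        hq0reg ⟨k, hk⟩ rfl⟩
    obtain ⟨S₀, hS₀⟩ := ihk (by omega) _ (hq0reg ⟨k, hk⟩ rfl)
    exact main m₀ S₀ p m₀ (le_refl m₀) hrw hS₀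

end P6

/-- (Derivation-division algorithm.) For `p ∈ 𝕃ₙ^reg`, the sequence
`p⁽⁰⁾ = p`, `p⁽ᵏ⁺¹⁾ = ∂p⁽ᵏ⁾/reg(∂p⁽ᵏ⁾)` consists of `n`-regular polynomials and eventually
reaches the coefficient ring `R`; in particular the derivation-division complexity `DD(p)`
is finite. -/
theorem statement6 (n : ℕ) (hn : 1 ≤ n) (p : Lring n) (hreg : Panazzolo.IsReg n n p) :
    ∃ m : ℕ, (∀ k < m, Panazzolo.IsReg n n (Panazzolo.seqDD n p k)) ∧
      Panazzolo.InR n (Panazzolo.seqDD n p m) := by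
  classical
  have hex : {j : ℕ | Panazzolo.InR n (Panazzolo.seqDD n p j)}.Nonempty :=
    P6.Tterm n (le_refl n) p hreg
  set m := sInf {j : ℕ | Panazzolo.InR n (Panazzolo.seqDD n p j)} with hm
  have hmem : Panazzolo.InR n (Panazzolo.seqDD n p m) := Nat.sInf_mem hex
  refine ⟨m, ?_, hmem⟩
  have hnotin : ∀ j < m, ¬ Panazzolo.InR n (Panazzolo.seqDD n p j) := by
    intro j hj h
    exact Nat.notMem_of_lt_sInf hj h
  have hhom : ∀ j, ∃ d, P6.Homog (Panazzolo.seqDD n p j) d := by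
    intro j
    induction j with
    | zero => exact P6.IsReg_homog n p hreg
    | succ j ih =>
      obtain ⟨d, hd⟩ := ih
      rw [P6.seqDD_succ, P6.divreg_eq]
      exact ⟨_, P6.Homog_emul (P6.Homog_der hd)⟩
  intro j hj
  cases j with
  | zero => exact hreg
  | succ j =>
    have hder : Panazzolo.der n (Panazzolo.seqDD n p j) ≠ 0 := by
      intro h
      apply hnotin (j+1) hj
      rw [P6.seqDD_succ, h, P6.divreg_zero]
      exact P6.InR_zero
    obtain ⟨d, hd⟩ := hhom j
    have := P6.Bmain n (le_refl n) (Panazzolo.der n (Panazzolo.seqDD n p j)) hder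
      (P6.CZ_top _) ⟨d, P6.Homog_der hd⟩
    rw [P6.seqDD_succ, P6.divreg_eq]
    exact this
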